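/- arXiv:1404.6679 — 8 statements merged into one kernel-verified Lean document; each statement's English description precedes it below -/
import Mathlib

section
/- The number of semistandard Young tableaux with two columns of lengths r ≥ k ≥ 0 and entries at most m (with m ≥ r) equals ((r-k+1)/(r+1)) * C(m, r) * C(m+1, k). -/
/-!
Record a column by the set of its entries. For columns `g` (length `k`) and `f` (length `r`), the
row condition `f i ≤ g i` says that below every threshold `t`, `g` has at most as many entries as
`f`. If it fails, there is a first threshold at which `g` leads by exactly one; exchanging the
parts of the two columns from that threshold on (the Lindström–Gessel–Viennot tail swap) leaves
that first threshold unchanged, so it is an involution, and it matches the failing pairs of sizes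
`(k, r)` with all pairs of sizes `(r + 1, k - 1)`. Hence the count is
`C(m, k) C(m, r) - C(m, r + 1) C(m, k - 1)`, which simplifies to the stated product.
-/

/-- Number of semistandard Young tableaux with two columns of lengths `r ≥ l`,
entries in `{1,…,m}` (an entry is encoded as an element of `Fin m`, with value = index + 1):
entries strictly increase down each column and weakly increase along rows. -/
noncomputable def ssyt2 (r l m : ℕ) : ℕ :=
  Nat.card {p : (Fin r → Fin m) × (Fin l → Fin m) //
    StrictMono p.1 ∧ StrictMono p.2 ∧
    ∀ (i : Fin r) (j : Fin l), (i : ℕ) = (j : ℕ) → p.1 i ≤ p.2 j}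

open Finset

def CrossesAt (A B : Finset ℕ) (t : ℕ) : Prop :=
  #{x ∈ A | x < t} = #{x ∈ B | x < t} + 1

instance (A B : Finset ℕ) : DecidablePred (CrossesAt A B) :=
  fun _ => inferInstanceAs (Decidable (_ = _))

def Crosses (q : Finset ℕ × Finset ℕ) : Prop :=
  ∃ t, CrossesAt q.1 q.2 t

noncomputable instance : DecidablePred Crosses := Classical.decPred _

lemma card_filter_lt_succ_le (A : Finset ℕ) (t : ℕ) :
    #{x ∈ A | x < t + 1} ≤ #{x ∈ A | x < t} + 1 :=
  calc #{x ∈ A | x < t + 1}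
      _ ≤ #(insert t {x ∈ A | x < t}) := card_le_card fun x hx => by
        simp only [mem_filter, mem_insert] at hx ⊢; grind
      _ ≤ #{x ∈ A | x < t} + 1 := card_insert_le _ _

lemma card_filter_lt_mono (A : Finset ℕ) {s t : ℕ} (hst : s ≤ t) :
    #{x ∈ A | x < s} ≤ #{x ∈ A | x < t} :=
  card_le_card fun x hx => by
    simp only [mem_filter] at hx ⊢; exact ⟨hx.1, by omega⟩

lemma exists_crossesAt {A B : Finset ℕ} {t : ℕ} (h : #{x ∈ B | x < t} < #{x ∈ A | x < t}) :
    ∃ s, CrossesAt A B s := by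
  -- at the least threshold where `A` leads, the lead is one: it grows by at most one per step
  have hex : ∃ t, #{x ∈ B | x < t} < #{x ∈ A | x < t} := ⟨t, h⟩
  obtain ⟨s, hs⟩ : ∃ s, Nat.find hex = s + 1 :=
    Nat.exists_eq_succ_of_ne_zero fun h0 => by simpa [h0] using Nat.find_spec hex
  have hlead := hs ▸ Nat.find_spec hex
  have hbehind := Nat.find_min hex (hs ▸ Nat.lt_add_one s : s < Nat.find hex)
  have := card_filter_lt_succ_le A s
  have := card_filter_lt_mono B (Nat.le_add_right s 1)
  exact ⟨s + 1, by unfold CrossesAt; omega⟩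

lemma crosses_of_card_lt {q : Finset ℕ × Finset ℕ} (h : #q.2 < #q.1) : Crosses q := by
  obtain ⟨t, ht⟩ := exists_nat_subset_range (q.1 ∪ q.2)
  have hlt {A : Finset ℕ} (hA : A ⊆ q.1 ∪ q.2) : {x ∈ A | x < t} = A :=
    filter_true_of_mem fun x hx => mem_range.1 (ht (hA hx))
  apply exists_crossesAt (t := t)
  rwa [hlt subset_union_left, hlt subset_union_right]

lemma not_crosses_iff {q : Finset ℕ × Finset ℕ} :
    ¬ Crosses q ↔ ∀ t, #{x ∈ q.1 | x < t} ≤ #{x ∈ q.2 | x < t} := by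
  refine ⟨fun h t => ?_, fun h ⟨t, ht⟩ => ?_⟩
  · by_contra! hlt
    exact h (exists_crossesAt hlt)
  · have := h t
    unfold CrossesAt at ht
    omega

def tailSwap (t : ℕ) (A B : Finset ℕ) : Finset ℕ × Finset ℕ :=
  ({x ∈ A | x < t} ∪ {x ∈ B | t ≤ x}, {x ∈ B | x < t} ∪ {x ∈ A | t ≤ x})

section tailSwap

variable {s t : ℕ} {A B : Finset ℕ}

lemma tailSwap_tailSwap : tailSwap t (tailSwap t A B).1 (tailSwap t A B).2 = (A, B) := by
  ext x <;> simp only [tailSwap, mem_union, mem_filter] <;> grind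

lemma filter_lt_tailSwap_fst (hst : s ≤ t) : {x ∈ (tailSwap t A B).1 | x < s} = {x ∈ A | x < s} := by
  ext x; simp only [tailSwap, mem_union, mem_filter]; grind

lemma filter_lt_tailSwap_snd (hst : s ≤ t) : {x ∈ (tailSwap t A B).2 | x < s} = {x ∈ B | x < s} := by
  ext x; simp only [tailSwap, mem_union, mem_filter]; grind

lemma crossesAt_tailSwap_iff (hst : s ≤ t) :
    CrossesAt (tailSwap t A B).1 (tailSwap t A B).2 s ↔ CrossesAt A B s := by
  rw [CrossesAt, CrossesAt, filter_lt_tailSwap_fst hst, filter_lt_tailSwap_snd hst]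

lemma card_filter_lt_add_card_filter_le (A : Finset ℕ) (t : ℕ) : #{x ∈ A | x < t} + #{x ∈ A | t ≤ x} = #A := by
  simpa only [not_lt] using card_filter_add_card_filter_not (s := A) (· < t)

lemma card_filter_lt_union_filter_le (A B : Finset ℕ) (t : ℕ) :
    #({x ∈ A | x < t} ∪ {x ∈ B | t ≤ x}) = #{x ∈ A | x < t} + #{x ∈ B | t ≤ x} :=
  card_union_of_disjoint <| disjoint_left.2 fun x hx hx' => by
    simp only [mem_filter] at hx hx'; omega

lemma card_tailSwap (h : CrossesAt A B t) :
    #(tailSwap t A B).1 = #B + 1 ∧ #(tailSwap t A B).2 + 1 = #A := by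
  have := card_filter_lt_add_card_filter_le A t
  have := card_filter_lt_add_card_filter_le B t
  rw [tailSwap, card_filter_lt_union_filter_le, card_filter_lt_union_filter_le]
  unfold CrossesAt at h
  omega

lemma tailSwap_subset {S : Finset ℕ} (hA : A ⊆ S) (hB : B ⊆ S) :
    (tailSwap t A B).1 ⊆ S ∧ (tailSwap t A B).2 ⊆ S :=
  ⟨union_subset ((filter_subset _ _).trans hA) ((filter_subset _ _).trans hB),
    union_subset ((filter_subset _ _).trans hB) ((filter_subset _ _).trans hA)⟩

end tailSwap

noncomputable def swapAtFirstCrossing (q : Finset ℕ × Finset ℕ) : Finset ℕ × Finset ℕ :=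
  if h : Crosses q then tailSwap (Nat.find h) q.1 q.2 else q

lemma swapAtFirstCrossing_of_crosses {q : Finset ℕ × Finset ℕ} (h : Crosses q) :
    swapAtFirstCrossing q = tailSwap (Nat.find h) q.1 q.2 :=
  dif_pos h

lemma find_crosses_swapAtFirstCrossing {q : Finset ℕ × Finset ℕ} (h : Crosses q) :
    ∃ h' : Crosses (swapAtFirstCrossing q), Nat.find h' = Nat.find h := by
  rw [swapAtFirstCrossing_of_crosses h]
  have hfirst : CrossesAt (tailSwap (Nat.find h) q.1 q.2).1 (tailSwap (Nat.find h) q.1 q.2).2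
      (Nat.find h) := (crossesAt_tailSwap_iff le_rfl).2 (Nat.find_spec h)
  refine ⟨⟨_, hfirst⟩, (Nat.find_eq_iff _).2 ⟨hfirst, fun s hs => ?_⟩⟩
  rw [crossesAt_tailSwap_iff hs.le]
  exact Nat.find_min h hs

lemma swapAtFirstCrossing_swapAtFirstCrossing {q : Finset ℕ × Finset ℕ} (h : Crosses q) :
    swapAtFirstCrossing (swapAtFirstCrossing q) = q := by
  obtain ⟨h', hfind⟩ := find_crosses_swapAtFirstCrossing h
  rw [swapAtFirstCrossing_of_crosses h', hfind, swapAtFirstCrossing_of_crosses h, tailSwap_tailSwap]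

lemma swapAtFirstCrossing_mem {S : Finset ℕ} {a b : ℕ} {q : Finset ℕ × Finset ℕ}
    (hq : q ∈ {q ∈ powersetCard (a + 1) S ×ˢ powersetCard b S | Crosses q}) :
    swapAtFirstCrossing q ∈ {q ∈ powersetCard (b + 1) S ×ˢ powersetCard a S | Crosses q} := by
  simp only [mem_filter, mem_product, mem_powersetCard] at hq ⊢
  obtain ⟨⟨⟨hA, hcardA⟩, hB, hcardB⟩, h⟩ := hq
  obtain ⟨h', -⟩ := find_crosses_swapAtFirstCrossing h
  have hcard := card_tailSwap (Nat.find_spec h)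
  have hsub := tailSwap_subset (t := Nat.find h) hA hB
  rw [swapAtFirstCrossing_of_crosses h] at h' ⊢
  exact ⟨⟨⟨hsub.1, by omega⟩, hsub.2, by omega⟩, h'⟩

theorem card_crosses_comm (S : Finset ℕ) (a b : ℕ) :
    #{q ∈ powersetCard (a + 1) S ×ˢ powersetCard b S | Crosses q} =
      #{q ∈ powersetCard (b + 1) S ×ˢ powersetCard a S | Crosses q} :=
  card_nbij' swapAtFirstCrossing swapAtFirstCrossing
    (fun _ hq => swapAtFirstCrossing_mem hq) (fun _ hq => swapAtFirstCrossing_mem hq)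
    (fun _ hq => swapAtFirstCrossing_swapAtFirstCrossing (mem_filter.1 hq).2)
    (fun _ hq => swapAtFirstCrossing_swapAtFirstCrossing (mem_filter.1 hq).2)

theorem card_not_crosses_add (S : Finset ℕ) {a b : ℕ} (hab : a ≤ b) :
    #{q ∈ powersetCard (a + 1) S ×ˢ powersetCard b S | ¬ Crosses q} +
      (#S).choose (b + 1) * (#S).choose a = (#S).choose (a + 1) * (#S).choose b := by
  have hall : {q ∈ powersetCard (b + 1) S ×ˢ powersetCard a S | Crosses q} =
      powersetCard (b + 1) S ×ˢ powersetCard a S :=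
    filter_true_of_mem fun q hq => by
      simp only [mem_product, mem_powersetCard] at hq
      exact crosses_of_card_lt (by omega)
  rw [← card_powersetCard, ← card_powersetCard, ← card_product, ← hall, ← card_crosses_comm,
    add_comm, card_filter_add_card_filter_not, card_product, card_powersetCard, card_powersetCard]

theorem card_not_crosses_powersetCard_zero (S : Finset ℕ) (b : ℕ) :
    #{q ∈ powersetCard 0 S ×ˢ powersetCard b S | ¬ Crosses q} = (#S).choose b := by
  rw [filter_true_of_mem, card_product, card_powersetCard, card_powersetCard, Nat.choose_zero_right,
    one_mul]
  rintro q hq ⟨t, ht⟩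
  simp only [mem_product, mem_powersetCard, card_eq_zero] at hq
  simp [CrossesAt, hq.1.2] at ht

section Columns

variable {n m r k : ℕ}

def colSet (f : Fin n → Fin m) : Finset ℕ :=
  univ.image (Fin.val ∘ f)

lemma card_filter_colSet_lt {f : Fin n → Fin m} (hf : StrictMono f) (t : ℕ) :
    #{x ∈ colSet f | x < t} = #{i | (f i : ℕ) < t} := by
  rw [colSet, filter_image, card_image_of_injective _ (Fin.val_injective.comp hf.injective)]
  rfl

lemma colSet_mem_powersetCard {f : Fin n → Fin m} (hf : StrictMono f) :
    colSet f ∈ powersetCard n (range m) := by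
  refine mem_powersetCard.2 ⟨fun x hx => ?_, ?_⟩
  · obtain ⟨i, -, rfl⟩ := mem_image.1 hx
    exact mem_range.2 (f i).2
  · rw [colSet, card_image_of_injective _ (Fin.val_injective.comp hf.injective), card_univ,
      Fintype.card_fin]

noncomputable def strictMonoEquivPowersetCard (n m : ℕ) :
    {f : Fin n → Fin m // StrictMono f} ≃ powersetCard n (range m) where
  toFun f := ⟨colSet f.1, colSet_mem_powersetCard f.2⟩
  invFun s :=
    have hs := mem_powersetCard.1 s.2
    ⟨fun i => ⟨s.1.orderEmbOfFin hs.2 i, mem_range.1 (hs.1 (orderEmbOfFin_mem _ _ i))⟩,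
      fun _ _ hij => (s.1.orderEmbOfFin hs.2).strictMono hij⟩
  left_inv f := by
    have hs := mem_powersetCard.1 (colSet_mem_powersetCard f.2)
    have huniq := orderEmbOfFin_unique hs.2 (f := fun i => (f.1 i : ℕ))
      (fun i => mem_image_of_mem _ (mem_univ i)) fun _ _ hij => f.2 hij
    ext i
    exact congrFun huniq.symm i
  right_inv s := Subtype.ext (image_orderEmbOfFin_univ _ _)

lemma row_le_iff_card_filter_lt_le {f : Fin r → ℕ} {g : Fin k → ℕ} (hf : StrictMono f)
    (hg : StrictMono g) (hk : k ≤ r) :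
    (∀ (i : Fin r) (j : Fin k), (i : ℕ) = j → f i ≤ g j) ↔ ∀ t, #{j | g j < t} ≤ #{i | f i < t} := by
  refine ⟨fun h t => card_le_card_of_injOn (Fin.castLE hk) (fun j hj => ?_)
    (Fin.castLE_injective hk).injOn, fun h i j hij => ?_⟩
  · simp only [coe_filter, mem_univ, true_and, Set.mem_ofPred_eq] at hj ⊢
    exact (h _ j rfl).trans_lt hj
  · by_contra! hlt
    have hbelow_f : ({i' | f i' < f i} : Finset (Fin r)) = Iio i := by ext; simp [hf.lt_iff_lt]
    have hbelow_g : Iic j ⊆ ({j' | g j' < f i} : Finset (Fin k)) := fun j' hj' => by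
      simp only [mem_filter, mem_univ, true_and, mem_Iic] at hj' ⊢
      exact (hg.monotone hj').trans_lt hlt
    have := card_le_card hbelow_g
    have := h (f i)
    rw [hbelow_f, Fin.card_Iio, Fin.card_Iic] at *
    omega

lemma not_crosses_colSet_iff {f : Fin r → Fin m} {g : Fin k → Fin m} (hf : StrictMono f)
    (hg : StrictMono g) (hk : k ≤ r) :
    ¬ Crosses (colSet g, colSet f) ↔ ∀ (i : Fin r) (j : Fin k), (i : ℕ) = j → f i ≤ g j := by
  rw [not_crosses_iff]
  simp only [card_filter_colSet_lt hf, card_filter_colSet_lt hg]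
  exact (row_le_iff_card_filter_lt_le (f := Fin.val ∘ f) (g := Fin.val ∘ g)
    (fun _ _ h => hf h) (fun _ _ h => hg h) hk).symm

lemma colSet_strictMonoEquivPowersetCard_symm (s : powersetCard n (range m)) :
    colSet ((strictMonoEquivPowersetCard n m).symm s).1 = s :=
  congrArg Subtype.val ((strictMonoEquivPowersetCard n m).apply_symm_apply s)

theorem ssyt2_eq_card_not_crosses (hk : k ≤ r) :
    ssyt2 r k m = #{q ∈ powersetCard k (range m) ×ˢ powersetCard r (range m) | ¬ Crosses q} := by
  rw [ssyt2, Nat.card_eq_fintype_card, Fintype.card_subtype]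
  let e := strictMonoEquivPowersetCard
  refine card_bij' (fun p _ => (colSet p.2, colSet p.1))
    (fun q hq => have hq := mem_product.1 (mem_filter.1 hq).1
      (((e r m).symm ⟨q.2, hq.2⟩).1, ((e k m).symm ⟨q.1, hq.1⟩).1)) ?_ ?_ ?_ ?_
  · rintro p hp
    obtain ⟨hf, hg, hrow⟩ := (mem_filter.1 hp).2
    exact mem_filter.2 ⟨mem_product.2 ⟨colSet_mem_powersetCard hg, colSet_mem_powersetCard hf⟩,
      (not_crosses_colSet_iff hf hg hk).2 hrow⟩
  · rintro q hq
    refine mem_filter.2 ⟨mem_univ _, ((e r m).symm _).2, ((e k m).symm _).2,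
      (not_crosses_colSet_iff ((e r m).symm _).2 ((e k m).symm _).2 hk).1 ?_⟩
    rw [colSet_strictMonoEquivPowersetCard_symm, colSet_strictMonoEquivPowersetCard_symm]
    exact (mem_filter.1 hq).2
  · rintro p hp
    obtain ⟨hf, hg, -⟩ := (mem_filter.1 hp).2
    exact Prod.ext (congrArg Subtype.val ((e r m).symm_apply_apply ⟨p.1, hf⟩))
      (congrArg Subtype.val ((e k m).symm_apply_apply ⟨p.2, hg⟩))
  · rintro q -
    exact Prod.ext (colSet_strictMonoEquivPowersetCard_symm _)
      (colSet_strictMonoEquivPowersetCard_symm _)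

end Columns

theorem choose_mul_sub_choose_mul (m r a : ℕ) :
    (m.choose (a + 1) * m.choose r - m.choose (r + 1) * m.choose a : ℚ) =
      (r - a) / (r + 1) * m.choose r * (m + 1).choose (a + 1) := by
  have hr : ((m + 1) * m.choose r : ℚ) = (m.choose r + m.choose (r + 1)) * (r + 1) := by
    exact_mod_cast Nat.choose_succ_succ m r ▸ Nat.add_one_mul_choose_eq m r
  have ha : ((m + 1) * m.choose a : ℚ) = (m.choose a + m.choose (a + 1)) * (a + 1) := by
    exact_mod_cast Nat.choose_succ_succ m a ▸ Nat.add_one_mul_choose_eq m a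
  rw [Nat.choose_succ_succ, Nat.cast_add]
  field_simp
  linear_combination (m.choose a : ℚ) * hr - (m.choose r : ℚ) * ha

theorem ssyt2_count_general (r k m : ℕ) (hk : k ≤ r) :
    (ssyt2 r k m : ℚ) =
      ((r - k + 1 : ℕ) : ℚ) / ((r : ℚ) + 1) *
        (m.choose r : ℚ) * ((m + 1).choose k : ℚ) := by
  rw [ssyt2_eq_card_not_crosses hk]
  cases k with
  | zero =>
    rw [card_not_crosses_powersetCard_zero, card_range, Nat.choose_zero_right, Nat.sub_zero, Nat.cast_add_one,
      div_self (Nat.cast_add_one_ne_zero r), one_mul, Nat.cast_one, mul_one]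
  | succ a =>
    have hcount := card_not_crosses_add (range m) (Nat.le_of_succ_le hk)
    rw [card_range, ← Nat.cast_inj (R := ℚ)] at hcount
    push_cast at hcount
    rw [eq_sub_of_add_eq hcount, choose_mul_sub_choose_mul,
      show r - (a + 1) + 1 = r - a by omega, Nat.cast_sub (by omega)]

/-- The number of two-column SSYTs with column lengths `r ≥ k` and entries at most `m ≥ r`
equals `((r-k+1)/(r+1)) * C(m,r) * C(m+1,k)`. -/
theorem ssyt2_count (r k m : ℕ) (hk : k ≤ r) (hr : r ≤ m) :
    (ssyt2 r k m : ℚ) =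
      ((r - k + 1 : ℕ) : ℚ) / ((r : ℚ) + 1) *
        (m.choose r : ℚ) * ((m + 1).choose k : ℚ) :=
  ssyt2_count_general r k m hk
end

section
/- For all integers r, α, β with 1 ≤ r ≤ α ≤ β, the number X_r^{α,β} of semistandard Young tableaux of rectangular shape with two columns each of length r whose bottom row is (α, β) equals C(β, r-1)·C(α-1, r-1) − C(β-1, r-2)·C(α, r). -/
/-!
Deleting the bottom row of a tableau with `r + 1` rows and bottom row `(α, β)` leaves a tableau
with `r` rows whose bottom row `(a, b)` satisfies `1 ≤ a < α` and `a ≤ b < β`, and conversely any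
such tableau extends by the row `(α, β)`. Hence `X_{r+1}^{α,β} = ∑_{1 ≤ a < α} ∑_{a ≤ b < β} X_r^{a,b}`.
The closed form holds for all `1 ≤ α ≤ β` (both sides vanish when `α < r`), so it passes through
this recursion by two hockey-stick summations; in the inner one the cross terms
`C(a, r) C(a - 1, r - 1)` cancel.
-/

/-- Binomial coefficient for integer arguments, with the convention
`C(n,k) = 0` whenever `k < 0` or `k > n`. -/
def Cz (n k : ℤ) : ℤ :=
  if 0 ≤ k ∧ k ≤ n then (n.toNat.choose k.toNat : ℤ) else 0

/-- `Xcard r α β` is the number of semistandard Young tableaux of rectangular shape with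
two columns each of length `r` (positive integer entries, strictly increasing down columns,
weakly increasing along rows) whose bottom row is `(α, β)`. -/
noncomputable def Xcard (r α β : ℕ) : ℕ :=
  Nat.card {p : (Fin r → ℕ) × (Fin r → ℕ) //
    StrictMono p.1 ∧ StrictMono p.2 ∧
    (∀ i, 1 ≤ p.1 i ∧ p.1 i ≤ p.2 i) ∧
    (∀ i : Fin r, (i : ℕ) = r - 1 → p.1 i = α ∧ p.2 i = β)}

open Finset

lemma Cz_natCast (n k : ℕ) : Cz n k = n.choose k := by
  by_cases h : k ≤ n
  · simp [Cz, h]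
  · rw [Cz, if_neg (by omega), Nat.choose_eq_zero_of_lt (by omega), Nat.cast_zero]

lemma Cz_of_neg {n k : ℤ} (hk : k < 0) : Cz n k = 0 := if_neg (by omega)

lemma Cz_of_lt {n k : ℤ} (h : n < k) : Cz n k = 0 := if_neg (by omega)

lemma Cz_zero {n : ℤ} (hn : 0 ≤ n) : Cz n 0 = 1 := by
  lift n to ℕ using hn
  simpa using Cz_natCast n 0

lemma Cz_add_one_add_one {n : ℤ} (hn : 0 ≤ n) (k : ℤ) :
    Cz (n + 1) (k + 1) = Cz n k + Cz n (k + 1) := by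
  lift n to ℕ using hn
  obtain hk | rfl | hk := lt_trichotomy k (-1)
  · rw [Cz_of_neg (by omega : k + 1 < 0), Cz_of_neg (by omega : k < 0),
      Cz_of_neg (by omega : k + 1 < 0), add_zero]
  · rw [neg_add_cancel, Cz_of_neg (by norm_num : (-1 : ℤ) < 0), Cz_zero (by omega),
      Cz_zero (by omega), zero_add]
  · lift k to ℕ using (by omega)
    simpa [Nat.choose_succ_succ', ← Cz_natCast] using Cz_natCast (n + 1) (k + 1)

lemma sum_Ico_Cz (c k : ℤ) {a n : ℕ} (ha : 0 ≤ a + c) (h : a ≤ n) :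
    ∑ b ∈ Ico a n, Cz (b + c) k = Cz (n + c) (k + 1) - Cz (a + c) (k + 1) := by
  rw [← sum_Ico_sub (fun b : ℕ => Cz (b + c) (k + 1)) h]
  refine sum_congr rfl fun b hb => ?_
  have hb : a ≤ b := (mem_Ico.1 hb).1
  rw [Nat.cast_add_one, add_right_comm, Cz_add_one_add_one (by omega)]
  ring

lemma sum_Ico_Cz_mul_sub_Cz_mul (s : ℤ) {a β : ℕ} (ha : 1 ≤ a) (h : a ≤ β) :
    ∑ b ∈ Ico a β, (Cz b s * Cz (a - 1) s - Cz (b - 1) (s - 1) * Cz a (s + 1)) =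
      Cz β (s + 1) * Cz (a - 1) s - Cz (β - 1) s * Cz a (s + 1) := by
  have h0 := sum_Ico_Cz 0 s (by omega) h
  have h1 := sum_Ico_Cz (-1) (s - 1) (by omega) h
  simp only [add_zero, ← sub_eq_add_neg, sub_add_cancel] at h0 h1
  rw [sum_sub_distrib, ← sum_mul, ← sum_mul, h0, h1]
  ring

lemma sum_Ico_one_mul_Cz_sub_mul_Cz (s : ℕ) {α : ℕ} (hα : 1 ≤ α) (x y : ℤ) :
    ∑ a ∈ Ico 1 α, (x * Cz (a - 1) s - y * Cz a (s + 1)) =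
      x * Cz (α - 1) (s + 1) - y * Cz α (s + 1 + 1) := by
  have h0 := sum_Ico_Cz 0 (s + 1) (by omega) hα
  have h1 := sum_Ico_Cz (-1) s (by omega) hα
  simp only [add_zero, ← sub_eq_add_neg, Nat.cast_one, sub_self] at h0 h1
  rw [sum_sub_distrib, ← mul_sum, ← mul_sum, h0, h1, Cz_of_lt (by omega : (0 : ℤ) < s + 1),
    Cz_of_lt (by omega : (1 : ℤ) < s + 1 + 1)]
  ring

lemma strictMono_snoc_iff {α : Type*} [Preorder α] {n : ℕ} {f : Fin (n + 1) → α} {a : α} :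
    StrictMono (Fin.snoc f a : Fin (n + 2) → α) ↔ StrictMono f ∧ f (Fin.last n) < a := by
  rw [Fin.strictMono_iff_lt_succ, Fin.forall_fin_succ', Fin.strictMono_iff_lt_succ]
  simp only [Fin.succ_castSucc, Fin.snoc_castSucc, Fin.succ_last, Fin.snoc_last]

def IsSSYT {r : ℕ} (p : (Fin r → ℕ) × (Fin r → ℕ)) : Prop :=
  StrictMono p.1 ∧ StrictMono p.2 ∧ ∀ i, 1 ≤ p.1 i ∧ p.1 i ≤ p.2 i

lemma isSSYT_snoc_iff {n : ℕ} {q : (Fin (n + 1) → ℕ) × (Fin (n + 1) → ℕ)} {a b : ℕ} :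
    IsSSYT ((Fin.snoc q.1 a, Fin.snoc q.2 b) : (Fin (n + 2) → ℕ) × (Fin (n + 2) → ℕ)) ↔
      IsSSYT q ∧ q.1 (Fin.last n) < a ∧ q.2 (Fin.last n) < b ∧ a ≤ b := by
  simp only [IsSSYT, strictMono_snoc_iff, Fin.forall_fin_succ' (n := n + 1), Fin.snoc_castSucc,
    Fin.snoc_last]
  constructor
  · rintro ⟨⟨h1, ha⟩, ⟨h2, hb⟩, hq, -, hab⟩
    exact ⟨⟨h1, h2, hq⟩, ha, hb, hab⟩
  · rintro ⟨⟨h1, h2, hq⟩, ha, hb, hab⟩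
    exact ⟨⟨h1, ha⟩, ⟨h2, hb⟩, hq, (hq _).1.trans ha.le, hab⟩

/-- Note the shift: `SSYT n α β` has `n + 1` rows. -/
abbrev SSYT (n α β : ℕ) : Type :=
  {p : (Fin (n + 1) → ℕ) × (Fin (n + 1) → ℕ) //
    IsSSYT p ∧ p.1 (Fin.last n) = α ∧ p.2 (Fin.last n) = β}

lemma Xcard_succ_eq_card_SSYT (n α β : ℕ) : Xcard (n + 1) α β = Nat.card (SSYT n α β) :=
  Nat.card_congr <| Equiv.subtypeEquivRight fun p => by
    have bottom {P : Fin (n + 1) → Prop} :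
        (∀ i : Fin (n + 1), (i : ℕ) = n + 1 - 1 → P i) ↔ P (Fin.last n) :=
      ⟨fun h => h _ (by simp), fun h i hi => by
        rwa [show i = Fin.last n from Fin.ext (by simpa using hi)]⟩
    simp only [IsSSYT, bottom, and_assoc]

instance (n α β : ℕ) : Finite (SSYT n α β) := by
  refine Finite.Set.subset (Set.Iic (fun _ => β) ×ˢ Set.Iic (fun _ => β)) ?_
  rintro p ⟨⟨-, h2, h12⟩, -, hβ⟩
  have hle : ∀ i, p.2 i ≤ β := fun i => hβ ▸ h2.monotone (Fin.le_last i)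
  exact ⟨fun i => (h12 i).2.trans (hle i), hle⟩

lemma card_SSYT_zero {α β : ℕ} (hα : 1 ≤ α) (h : α ≤ β) : Nat.card (SSYT 0 α β) = 1 := by
  have : Subsingleton (Fin (0 + 1)) := inferInstanceAs (Subsingleton (Fin 1))
  rw [Nat.card_eq_one_iff_exists]
  refine ⟨⟨(fun _ => α, fun _ => β), ⟨Subsingleton.strictMono _, Subsingleton.strictMono _,
    fun _ => ⟨hα, h⟩⟩, rfl, rfl⟩, ?_⟩
  rintro ⟨p, -, h1, h2⟩
  ext i <;> rw [Subsingleton.elim i (Fin.last 0)]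
  exacts [h1, h2]

lemma IsSSYT.init {n : ℕ} {p : (Fin (n + 2) → ℕ) × (Fin (n + 2) → ℕ)} (hp : IsSSYT p) :
    IsSSYT (Fin.init p.1, Fin.init p.2) ∧ Fin.init p.1 (Fin.last n) < p.1 (Fin.last (n + 1)) ∧
      Fin.init p.2 (Fin.last n) < p.2 (Fin.last (n + 1)) := by
  have := (isSSYT_snoc_iff (q := (Fin.init p.1, Fin.init p.2)) (a := p.1 (Fin.last _))
    (b := p.2 (Fin.last _))).1 (by simpa only [Fin.snoc_init_self] using hp)
  exact this.imp_right fun h => ⟨h.1, h.2.1⟩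

def rowsAbove (α β : ℕ) : Finset (Σ _ : ℕ, ℕ) := (Ico 1 α).sigma fun a => Ico a β

def SSYT.succEquiv {n α β : ℕ} (h : α ≤ β) :
    SSYT (n + 1) α β ≃ Σ ab : rowsAbove α β, SSYT n ab.1.1 ab.1.2 where
  toFun t :=
    ⟨⟨⟨Fin.init t.1.1 (Fin.last n), Fin.init t.1.2 (Fin.last n)⟩, by
      obtain ⟨hq, ha, hb⟩ := t.2.1.init
      simp only [rowsAbove, mem_sigma, mem_Ico, ← t.2.2.1, ← t.2.2.2]
      exact ⟨⟨(hq.2.2 _).1, ha⟩, (hq.2.2 _).2, hb⟩⟩,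
      ⟨(Fin.init t.1.1, Fin.init t.1.2), t.2.1.init.1, rfl, rfl⟩⟩
  invFun u := ⟨(Fin.snoc u.2.1.1 α, Fin.snoc u.2.1.2 β), by
    obtain ⟨⟨⟨a, b⟩, hab⟩, q, hq, ha, hb⟩ := u
    simp only [rowsAbove, mem_sigma, mem_Ico] at hab
    exact ⟨isSSYT_snoc_iff.2 ⟨hq, ha.trans_lt hab.1.2, hb.trans_lt hab.2.2, h⟩,
      by simp, by simp⟩⟩
  left_inv t := by
    obtain ⟨p, -, h1, h2⟩ := t
    ext : 2 <;> simp [← h1, ← h2]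
  right_inv u := by
    obtain ⟨⟨⟨a, b⟩, hab⟩, q, hq, ha, hb⟩ := u
    refine Sigma.subtype_ext (Subtype.ext ?_) (by simp)
    simpa using ⟨ha, hb⟩

lemma Xcard_add_two {n α β : ℕ} (h : α ≤ β) :
    Xcard (n + 2) α β = ∑ a ∈ Ico 1 α, ∑ b ∈ Ico a β, Xcard (n + 1) a b := by
  rw [Xcard_succ_eq_card_SSYT, Nat.card_congr (SSYT.succEquiv h), Nat.card_sigma,
    sum_coe_sort (rowsAbove α β) fun ab => Nat.card (SSYT n ab.1 ab.2), rowsAbove, sum_sigma]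
  simp only [Xcard_succ_eq_card_SSYT]

theorem Xcard_add_one_eq (s α β : ℕ) (hα : 1 ≤ α) (h : α ≤ β) :
    (Xcard (s + 1) α β : ℤ) = Cz β s * Cz (α - 1) s - Cz (β - 1) (s - 1) * Cz α (s + 1) := by
  induction s generalizing α β with
  | zero =>
    rw [Xcard_succ_eq_card_SSYT, card_SSYT_zero hα h, Nat.cast_zero, Cz_zero (by omega),
      Cz_zero (by omega), Cz_of_neg (by norm_num : (0 : ℤ) - 1 < 0)]
    norm_num
  | succ s ih =>
    calc (Xcard (s + 2) α β : ℤ)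
        = ∑ a ∈ Ico 1 α, ∑ b ∈ Ico a β, (Xcard (s + 1) a b : ℤ) := by
          exact_mod_cast Xcard_add_two h
      _ = ∑ a ∈ Ico 1 α, ∑ b ∈ Ico a β,
            (Cz b s * Cz (a - 1) s - Cz (b - 1) (s - 1) * Cz a (s + 1)) :=
          sum_congr rfl fun a ha => sum_congr rfl fun b hb =>
            ih a b (mem_Ico.1 ha).1 (mem_Ico.1 hb).1
      _ = ∑ a ∈ Ico 1 α, (Cz β (s + 1) * Cz (a - 1) s - Cz (β - 1) s * Cz a (s + 1)) :=
          sum_congr rfl fun a ha =>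
            sum_Ico_Cz_mul_sub_Cz_mul s (mem_Ico.1 ha).1 ((mem_Ico.1 ha).2.le.trans h)
      _ = Cz β (s + 1) * Cz (α - 1) (s + 1) - Cz (β - 1) s * Cz α (s + 1 + 1) :=
          sum_Ico_one_mul_Cz_sub_mul_Cz s hα _ _
      _ = _ := by push_cast; rw [add_sub_cancel_right]

/-- For `1 ≤ r ≤ α ≤ β`,
`X_r^{α,β} = C(β, r-1)·C(α-1, r-1) − C(β-1, r-2)·C(α, r)`. -/
theorem Xcard_eq (r α β : ℕ) (h1 : 1 ≤ r) (h2 : r ≤ α) (h3 : α ≤ β) :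
    (Xcard r α β : ℤ) =
      Cz (β : ℤ) ((r : ℤ) - 1) * Cz ((α : ℤ) - 1) ((r : ℤ) - 1) -
        Cz ((β : ℤ) - 1) ((r : ℤ) - 2) * Cz (α : ℤ) (r : ℤ) := by
  obtain ⟨s, rfl⟩ := Nat.exists_eq_add_of_le' h1
  rw [Xcard_add_one_eq s α β (by omega) h3]
  push_cast
  rw [add_sub_cancel_right, show (s : ℤ) + 1 - 2 = s - 1 by ring]
end

section
/- For two-column shapes with column lengths r ≥ l and entries at most m, the number Y_{r,l}^m(m) of SSYTs in which the maximal entry m appears in the second column equals C(m, l-1)·C(m, r) − C(m-1, l-2)·C(m+1, r+1). -/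
/-- `Ycard r l m β` is the number of SSYTs with two columns of lengths `r ≥ l`, entries in
`{1,…,m}` (encoded in `Fin m`, value = index + 1), such that the value `β` appears
somewhere in the second column. -/
noncomputable def Ycard (r l m β : ℕ) : ℕ :=
  Nat.card {p : (Fin r → Fin m) × (Fin l → Fin m) //
    (StrictMono p.1 ∧ StrictMono p.2 ∧
      ∀ (i : Fin r) (j : Fin l), (i : ℕ) = (j : ℕ) → p.1 i ≤ p.2 j) ∧
    ∃ j : Fin l, (p.2 j : ℕ) + 1 = β}

/-!
The entry `m` of such a tableau is the bottom entry of its second column. Deleting it leaves a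
pair of columns `a` (length `r`, entries `≤ m`) and `b` (length `l - 1`, entries `≤ m - 1`)
subject only to `a i ≤ b i` in every row. Among all `C(m, r) C(m - 1, l - 1)` pairs of columns,
those violating this in some row correspond bijectively, by swapping the tails of `a` and `b`
below the first violating row (Lindström–Gessel–Viennot), to pairs of columns of lengths `r + 1`
and `l - 2`. Hence the count is `C(m, r) C(m - 1, l - 1) - C(m, r + 1) C(m - 1, l - 2)`, which
Pascal's rule turns into the stated form.
-/

open Function Set

/-- Entries are shifted to `{0, …, m - 1}`, and the sequence is padded with zeros. -/
structure IsColumn (n m : ℕ) (f : ℕ → ℕ) : Prop where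
  strictMonoOn : StrictMonoOn f (Iio n)
  lt_bound : ∀ i < n, f i < m
  eq_zero : ∀ i, n ≤ i → f i = 0

abbrev Column (n m : ℕ) := {f : ℕ → ℕ // IsColumn n m f}

namespace IsColumn

variable {n m : ℕ} {f : ℕ → ℕ}

lemma add_le_apply (hf : IsColumn n m f) {i d : ℕ} (h : i + d < n) : f i + d ≤ f (i + d) := by
  induction d with
  | zero => rfl
  | succ d ih =>
    have := ih (by omega)
    have := hf.strictMonoOn (show i + d < n by omega) h (show i + d < i + (d + 1) by omega)
    omega

lemma apply_add_sub_le (hf : IsColumn n m f) {i : ℕ} (hi : i < n) : f i + (n - i) ≤ m := by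
  have := hf.add_le_apply (i := i) (d := n - 1 - i) (by omega)
  have := hf.lt_bound (i + (n - 1 - i)) (by omega)
  omega

end IsColumn

def strictMonoFinsetEquiv (n m : ℕ) :
    {f : Fin n → Fin m // StrictMono f} ≃ {s : Finset (Fin m) // s.card = n} where
  toFun f := ⟨Finset.univ.image f.1, by
    rw [Finset.card_image_of_injective _ f.2.injective, Finset.card_univ, Fintype.card_fin]⟩
  invFun s := ⟨s.1.orderEmbOfFin s.2, (s.1.orderEmbOfFin s.2).strictMono⟩
  left_inv f := Subtype.ext <| .symm <|
    Finset.orderEmbOfFin_unique _ (fun i => Finset.mem_image_of_mem _ (Finset.mem_univ i)) f.2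
  right_inv s := Subtype.ext <| by
    rw [← Finset.coe_inj, Finset.coe_image, Finset.coe_univ, Set.image_univ,
      Finset.range_orderEmbOfFin]

def columnEquiv (n m : ℕ) : {f : Fin n → Fin m // StrictMono f} ≃ Column n m where
  toFun f := ⟨fun i => if h : i < n then f.1 ⟨i, h⟩ else 0,
    { strictMonoOn := fun i hi j hj hij => by
        simp only [dif_pos (show i < n from hi), dif_pos (show j < n from hj)]
        exact f.2 (show (⟨i, hi⟩ : Fin n) < ⟨j, hj⟩ from hij)
      lt_bound := fun i hi => by simp [hi]
      eq_zero := fun i hi => by simp [not_lt.2 hi] }⟩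
  invFun c := ⟨fun i => ⟨c.1 i, c.2.lt_bound i i.2⟩,
    fun i j h => c.2.strictMonoOn i.2 j.2 h⟩
  left_inv f := by ext; simp
  right_inv c := by
    ext i
    by_cases h : i < n
    · simp [h]
    · simp [h, c.2.eq_zero i (not_lt.1 h)]

lemma columnEquiv_apply {n m : ℕ} (f : {f : Fin n → Fin m // StrictMono f}) {i : ℕ} (h : i < n) :
    (columnEquiv n m f).1 i = f.1 ⟨i, h⟩ := dif_pos h

instance (n m : ℕ) : Finite (Column n m) := .of_equiv _ (columnEquiv n m)

lemma card_column (n m : ℕ) : Nat.card (Column n m) = m.choose n := by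
  rw [← Nat.card_congr (columnEquiv n m), Nat.card_congr (strictMonoFinsetEquiv n m),
    Nat.card_eq_fintype_card, Fintype.card_finset_len, Fintype.card_fin]

def spliceUp (x y : ℕ → ℕ) (k : ℕ) : ℕ → ℕ := fun i => if i ≤ k then x i else y (i - 1)

def spliceDown (x y : ℕ → ℕ) (k : ℕ) : ℕ → ℕ := fun i => if i < k then x i else y (i + 1)

section Splice

variable {x y : ℕ → ℕ} {k n M : ℕ}

lemma spliceDown_spliceDown_spliceUp : spliceDown (spliceDown x y k) (spliceUp y x k) k = x := by
  funext i
  simp only [spliceDown, spliceUp]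
  split_ifs <;> first | rfl | omega

lemma spliceUp_spliceUp_spliceDown : spliceUp (spliceUp x y k) (spliceDown y x k) k = x := by
  funext i
  simp only [spliceDown, spliceUp]
  split_ifs <;> first | rfl | omega | (congr 1; omega)

lemma IsColumn.spliceUp (hy : IsColumn n M y) (hx : StrictMonoOn x (Iic k)) (hxM : x k < M)
    (hk : k ≤ n) (hxy : k < n → x k < y k) : IsColumn (n + 1) M (spliceUp x y k) where
  strictMonoOn i (hi : i < _) j (hj : j < _) hij := by
    simp only [_root_.spliceUp]
    split_ifs with hik hjk hjk
    · exact hx hik hjk hij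
    · calc x i ≤ x k := hx.monotoneOn hik self_mem_Iic hik
        _ < y k := hxy (by omega)
        _ ≤ y (j - 1) := hy.strictMonoOn.monotoneOn (show k < n by omega)
            (show j - 1 < n by omega) (by omega)
    · omega
    · exact hy.strictMonoOn (show i - 1 < n by omega)
        (show j - 1 < n by omega) (by omega)
  lt_bound i hi := by
    simp only [_root_.spliceUp]
    split_ifs with hik
    · exact (hx.monotoneOn hik self_mem_Iic hik).trans_lt hxM
    · exact hy.lt_bound _ (by omega)
  eq_zero i hi := by
    simp only [_root_.spliceUp, if_neg (show ¬ i ≤ k by omega)]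
    exact hy.eq_zero _ (by omega)

lemma IsColumn.spliceDown (hy : IsColumn (n + 1) M y) (hx : StrictMonoOn x (Iio k))
    (hk : k ≤ n) (hxy : ∀ i < k, x i ≤ y i) : IsColumn n M (spliceDown x y k) where
  strictMonoOn i (hi : i < _) j (hj : j < _) hij := by
    simp only [_root_.spliceDown]
    split_ifs with hik hjk hjk
    · exact hx hik hjk hij
    · calc x i ≤ y i := hxy i hik
        _ < y (j + 1) := hy.strictMonoOn (show i < n + 1 by omega)
            (show j + 1 < n + 1 by omega) (by omega)
    · omega
    · exact hy.strictMonoOn (show i + 1 < n + 1 by omega)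
        (show j + 1 < n + 1 by omega) (by omega)
  lt_bound i hi := by
    simp only [_root_.spliceDown]
    split_ifs with hik
    · exact (hxy i hik).trans_lt (hy.lt_bound i (by omega))
    · exact hy.lt_bound _ (by omega)
  eq_zero i hi := by
    simp only [_root_.spliceDown, if_neg (show ¬ i < k by omega)]
    exact hy.eq_zero _ (by omega)

end Splice

/-- The first row `i < n` with `x i < y i`, or `n` if there is none. -/
def firstLt (n : ℕ) (x y : ℕ → ℕ) : ℕ :=
  Nat.find (⟨n, .inl le_rfl⟩ : ∃ i, n ≤ i ∨ x i < y i)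

section FirstLt

variable {n k : ℕ} {x y : ℕ → ℕ}

lemma firstLt_le : firstLt n x y ≤ n := Nat.find_min' _ (.inl le_rfl)

lemma lt_of_firstLt_lt (h : firstLt n x y < n) : x (firstLt n x y) < y (firstLt n x y) :=
  (Nat.find_spec (⟨n, .inl le_rfl⟩ : ∃ i, n ≤ i ∨ x i < y i)).resolve_left (not_le.2 h)

lemma le_of_lt_firstLt {i : ℕ} (h : i < firstLt n x y) : y i ≤ x i :=
  not_lt.1 fun hlt => Nat.find_min _ h (.inr hlt)

lemma firstLt_lt_of_exists (h : ∃ i < n, x i < y i) : firstLt n x y < n := by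
  obtain ⟨i, hi, hlt⟩ := h
  exact (Nat.find_min' _ (.inr hlt)).trans_lt hi

lemma firstLt_eq (hk : k ≤ n) (hlt : k < n → x k < y k) (hle : ∀ i < k, y i ≤ x i) :
    firstLt n x y = k := by
  refine (Nat.find_eq_iff _).2 ⟨?_, fun i hi => ?_⟩
  · exact hk.lt_or_eq.elim (fun h => .inr (hlt h)) (fun h => .inl h.ge)
  · exact not_or.2 ⟨by omega, not_lt.2 (hle i hi)⟩

lemma firstLt_spliceUp_spliceDown (hk : k ≤ n) (hle : ∀ i < k, y i ≤ x i)
    (hx : k < n → x k < x (k + 1)) : firstLt n (spliceUp x y k) (spliceDown y x k) = k :=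
  firstLt_eq hk (fun h => by simpa [spliceUp, spliceDown] using hx h)
    (fun i hi => by simpa [spliceUp, spliceDown, hi, hi.le] using hle i hi)

end FirstLt

abbrev DominatedPairs (r s m m' : ℕ) :=
  {p : Column r m × Column s m' // ∀ i < s, p.1.1 i ≤ p.2.1 i}

abbrev ViolatingPairs (r s m m' : ℕ) :=
  {p : Column r m × Column s m' // ∃ i < s, p.2.1 i < p.1.1 i}

lemma card_dominatedPairs_add_card_violatingPairs (r s m m' : ℕ) :
    Nat.card (DominatedPairs r s m m') + Nat.card (ViolatingPairs r s m m') =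
      m.choose r * m'.choose s := by
  have hcompl : {p : Column r m × Column s m' // ¬ ∀ i < s, p.1.1 i ≤ p.2.1 i} ≃
      ViolatingPairs r s m m' := Equiv.subtypeEquivRight fun p => by push Not; rfl
  classical
  rw [← Nat.card_congr hcompl, ← Nat.card_sum,
    Nat.card_congr (Equiv.sumCompl fun p : Column r m × Column s m' => ∀ i < s, p.1.1 i ≤ p.2.1 i),
    Nat.card_prod, card_column, card_column]

section Reflection

variable {r s m m' : ℕ}

/-- Swap the tails of the two columns below the first row violating dominance. -/
def reflection (hs : s + 1 ≤ r) (hm : m' ≤ m) (hmm : s + m ≤ r + m') :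
    ViolatingPairs r (s + 1) m m' ≃ Column (r + 1) m × Column s m' where
  toFun p :=
    let a := p.1.1; let b := p.1.2; let k := firstLt (s + 1) b.1 a.1
    have hk : k < s + 1 := firstLt_lt_of_exists p.2
    (⟨spliceUp b.1 a.1 k, a.2.spliceUp (b.2.strictMonoOn.mono (Iic_subset_Iio.2 hk))
        ((b.2.lt_bound k hk).trans_le hm) (by omega) fun _ => lt_of_firstLt_lt hk⟩,
      ⟨spliceDown a.1 b.1 k, b.2.spliceDown (a.2.strictMonoOn.mono (Iio_subset_Iio (by omega)))
        (by omega) fun _ => le_of_lt_firstLt⟩)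
  invFun q :=
    let c := q.1; let d := q.2; let K := firstLt s c.1 d.1
    have hK : K ≤ s := firstLt_le
    ⟨(⟨spliceDown d.1 c.1 K, c.2.spliceDown (d.2.strictMonoOn.mono (Iio_subset_Iio hK))
        (by omega) fun _ => le_of_lt_firstLt⟩,
      -- `c K < m'` because `c` has `r - K` larger entries, all below `m`.
      ⟨spliceUp c.1 d.1 K, d.2.spliceUp (c.2.strictMonoOn.mono (Iic_subset_Iio.2 (by omega)))
        (by have := c.2.apply_add_sub_le (i := K) (by omega); omega) hK lt_of_firstLt_lt⟩),
      ⟨K, by omega, by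
        simpa [spliceUp, spliceDown] using c.2.strictMonoOn (show K < r + 1 by omega)
          (show K + 1 < r + 1 by omega) K.lt_succ_self⟩⟩
  left_inv p := by
    obtain ⟨⟨a, b⟩, hv⟩ := p
    have hk : firstLt (s + 1) b.1 a.1 < s + 1 := firstLt_lt_of_exists hv
    have hK := firstLt_spliceUp_spliceDown (n := s) (by omega) (fun _ => le_of_lt_firstLt)
      fun _ => b.2.strictMonoOn (show _ < s + 1 by omega) (show _ < s + 1 by omega)
        (firstLt (s + 1) b.1 a.1).lt_succ_self
    refine Subtype.ext (Prod.ext (Subtype.ext ?_) (Subtype.ext ?_)) <;> dsimp only <;> rw [hK]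
    exacts [spliceDown_spliceDown_spliceUp, spliceUp_spliceUp_spliceDown]
  right_inv q := by
    obtain ⟨c, d⟩ := q
    have hK : firstLt s c.1 d.1 ≤ s := firstLt_le
    have hk := firstLt_spliceUp_spliceDown (n := s + 1) (by omega) (fun _ => le_of_lt_firstLt)
      fun _ => c.2.strictMonoOn (show _ < r + 1 by omega) (show _ < r + 1 by omega)
        (firstLt s c.1 d.1).lt_succ_self
    refine Prod.ext (Subtype.ext ?_) (Subtype.ext ?_) <;> dsimp only <;> rw [hk]
    exacts [spliceUp_spliceUp_spliceDown, spliceDown_spliceDown_spliceUp]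

end Reflection

lemma card_violatingPairs {r s m m' : ℕ} (hs : s + 1 ≤ r) (hm : m' ≤ m) (hmm : s + m ≤ r + m') :
    Nat.card (ViolatingPairs r (s + 1) m m') = m.choose (r + 1) * m'.choose s := by
  rw [Nat.card_congr (reflection hs hm hmm), Nat.card_prod, card_column, card_column]

lemma card_dominatedPairs_add {r s m m' : ℕ} (hs : s + 1 ≤ r) (hm : m' ≤ m)
    (hmm : s + m ≤ r + m') :
    Nat.card (DominatedPairs r (s + 1) m m') + m.choose (r + 1) * m'.choose s =
      m.choose r * m'.choose (s + 1) := by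
  rw [← card_violatingPairs hs hm hmm, card_dominatedPairs_add_card_violatingPairs]

lemma card_dominatedPairs_zero (r m m' : ℕ) :
    Nat.card (DominatedPairs r 0 m m') = m.choose r := by
  have : IsEmpty (ViolatingPairs r 0 m m') := ⟨fun ⟨_, _, hi, _⟩ => Nat.not_lt_zero _ hi⟩
  simpa using card_dominatedPairs_add_card_violatingPairs r 0 m m'

namespace IsColumn

variable {s n : ℕ} {b : ℕ → ℕ}

lemma exists_add_one_eq_iff (hb : IsColumn (s + 1) (n + 1) b) :
    (∃ j < s + 1, b j + 1 = n + 1) ↔ b s = n := by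
  refine ⟨fun ⟨j, hj, hbj⟩ => ?_, fun h => ⟨s, s.lt_succ_self, by rw [h]⟩⟩
  have := hb.strictMonoOn.monotoneOn (show j < s + 1 from hj) (show s < s + 1 by omega)
    (by omega)
  have := hb.lt_bound s (by omega)
  omega

lemma update_last_zero (hb : IsColumn (s + 1) (n + 1) b) : IsColumn s n (update b s 0) where
  strictMonoOn i (hi : i < s) j (hj : j < s) hij := by
    simpa [update_apply, hi.ne, hj.ne] using
      hb.strictMonoOn (show i < s + 1 by omega) (show j < s + 1 by omega) hij
  lt_bound i hi := by
    have := hb.strictMonoOn (show i < s + 1 by omega) (show s < s + 1 by omega) hi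
    have := hb.lt_bound s (by omega)
    simp only [update_apply, hi.ne, if_false]
    omega
  eq_zero i hi := by
    rcases hi.eq_or_lt with rfl | hi
    · simp
    · simpa [update_apply, hi.ne'] using hb.eq_zero i hi

lemma update_last_max (hb : IsColumn s n b) : IsColumn (s + 1) (n + 1) (update b s n) where
  strictMonoOn i (hi : i < s + 1) j (hj : j < s + 1) hij := by
    have hj' : j = s ∨ j < s := by omega
    rcases hj' with rfl | hj'
    · simpa [update_apply, hij.ne] using hb.lt_bound i hij
    · simpa [update_apply, (hij.trans hj').ne, hj'.ne] using
        hb.strictMonoOn (show i < s by omega) hj' hij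
  lt_bound i hi := by
    rcases (show i = s ∨ i < s by omega) with rfl | hi
    · simp
    · simpa [update_apply, hi.ne] using (hb.lt_bound i hi).trans n.lt_succ_self
  eq_zero i hi := by
    simpa [update_apply, (show i ≠ s by omega)] using hb.eq_zero i (by omega)

end IsColumn

abbrev TableauxWithEntry (r l m β : ℕ) :=
  {p : Column r m × Column l m // (∀ i < l, p.1.1 i ≤ p.2.1 i) ∧ ∃ j < l, p.2.1 j + 1 = β}

lemma Ycard_eq_card (r l m β : ℕ) : Ycard r l m β = Nat.card (TableauxWithEntry r l m β) :=
  Nat.card_congr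
  { toFun x := ⟨(columnEquiv r m ⟨x.1.1, x.2.1.1⟩, columnEquiv l m ⟨x.1.2, x.2.1.2.1⟩), by
      refine ⟨fun i hi => ?_, ?_⟩
      · by_cases hir : i < r
        · rw [columnEquiv_apply _ hir, columnEquiv_apply _ hi]
          exact x.2.1.2.2 ⟨i, hir⟩ ⟨i, hi⟩ rfl
        · rw [(columnEquiv r m _).2.eq_zero i (not_lt.1 hir)]
          exact Nat.zero_le _
      · obtain ⟨j, hj⟩ := x.2.2
        exact ⟨j, j.2, by rwa [columnEquiv_apply _ j.2]⟩⟩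
    invFun y := ⟨(((columnEquiv r m).symm y.1.1).1, ((columnEquiv l m).symm y.1.2).1),
      ⟨((columnEquiv r m).symm y.1.1).2, ((columnEquiv l m).symm y.1.2).2,
        fun i j hij => by simpa [Fin.le_def, columnEquiv, hij] using y.2.1 j j.2⟩,
      by obtain ⟨j, hj, hβ⟩ := y.2.2; exact ⟨⟨j, hj⟩, hβ⟩⟩
    left_inv x := by ext <;> simp
    right_inv y := by ext <;> simp }

def lastEntryEquiv {r s n : ℕ} (hs : s + 1 ≤ r) :
    TableauxWithEntry r (s + 1) (n + 1) (n + 1) ≃ DominatedPairs r s (n + 1) n where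
  toFun p := ⟨(p.1.1, ⟨update p.1.2.1 s 0, p.1.2.2.update_last_zero⟩),
    fun i hi => by simpa [update_apply, hi.ne] using p.2.1 i (by omega)⟩
  invFun q := ⟨(q.1.1, ⟨update q.1.2.1 s n, q.1.2.2.update_last_max⟩),
    ⟨fun i hi => by
      rcases (show i = s ∨ i < s by omega) with rfl | hi
      · simpa using Nat.lt_succ_iff.1 (q.1.1.2.lt_bound i (by omega))
      · simpa [update_apply, hi.ne] using q.2 i hi,
    ⟨s, s.lt_succ_self, by simp⟩⟩⟩
  left_inv p := by
    have hlast := p.1.2.2.exists_add_one_eq_iff.1 p.2.2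
    ext : 3
    · rfl
    · simp [hlast]
  right_inv q := by
    ext : 3
    · rfl
    · simp [q.1.2.2.eq_zero s le_rfl]

lemma Cz_eq_choose {x y : ℤ} (n k : ℕ) (hx : x = n) (hy : y = k) : Cz x y = n.choose k := by
  subst hx hy
  unfold Cz
  split_ifs with h
  · simp
  · rw [Nat.choose_eq_zero_of_lt (by omega)]; rfl

lemma Cz_of_neg_s6 {x y : ℤ} (hy : y < 0) : Cz x y = 0 := if_neg fun h => by omega

/-- `Y_{r,l}^m(m) = C(m, l-1)·C(m, r) − C(m-1, l-2)·C(m+1, r+1)`. -/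
theorem Ycard_max (r l m : ℕ) (hl : 1 ≤ l) (hlr : l ≤ r) (hrm : r ≤ m) :
    (Ycard r l m m : ℤ) =
      Cz (m : ℤ) ((l : ℤ) - 1) * Cz (m : ℤ) (r : ℤ) -
        Cz ((m : ℤ) - 1) ((l : ℤ) - 2) * Cz ((m : ℤ) + 1) ((r : ℤ) + 1) := by
  obtain ⟨n, rfl⟩ : ∃ n, m = n + 1 := ⟨m - 1, by omega⟩
  obtain ⟨s, rfl⟩ : ∃ s, l = s + 1 := ⟨l - 1, by omega⟩
  rw [Ycard_eq_card, Nat.card_congr (lastEntryEquiv hlr),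
    Cz_eq_choose (n + 1) s (by simp) (by simp), Cz_eq_choose (n + 1) r rfl rfl]
  rcases s with _ | s
  · rw [card_dominatedPairs_zero, Cz_of_neg_s6 (by omega)]
    simp
  · have key : (_ : ℤ) = _ := congrArg Nat.cast <|
      card_dominatedPairs_add (r := r) (s := s) (m := n + 1) (by omega) n.le_succ (by omega)
    rw [Cz_eq_choose n s (by simp) (by push_cast; ring),
      Cz_eq_choose (n + 2) (r + 1) (by push_cast; ring) (by simp),
      Nat.choose_succ_succ' n s, Nat.choose_succ_succ' (n + 1) r]
    push_cast at key ⊢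
    linear_combination key
end

section
/- For l ≤ r and any β with l + m − r ≤ β ≤ m, the count Y_{r,l}^β(m) of two-column SSYTs with column lengths r ≥ l, entries at most m, and containing β in the second column, is independent of β: Y_{r,l}^β(m) = Y_{r,l}^{β'}(m) whenever both β and β' lie in the interval [l+m-r, m]. -/
open Function Set

theorem Fin.val_add_le_of_strictMono {r m : ℕ} {f : Fin r → Fin m} (hf : StrictMono f)
    (i : Fin r) : (f i : ℕ) + r ≤ m + i := by
  have hcard : (Finset.Ici i).card ≤ (Finset.Ici (f i)).card :=
    Finset.card_le_card_of_injOn f (fun a ha => by simpa using hf.monotone (by simpa using ha))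
      hf.injective.injOn
  rw [Fin.card_Ici, Fin.card_Ici] at hcard
  omega

theorem StrictMono.swap_comp {α β : Type*} [Preorder α] [LinearOrder β]
    {c : α → β} {b b' : β} (hc : StrictMono c) (hbb' : b ⋖ b')
    (hmiss : b ∉ range c ∨ b' ∉ range c) : StrictMono (Equiv.swap b b' ∘ c) := by
  intro x y hxy
  have hcxy := hc hxy
  have := hbb'.lt
  have := hbb'.ge_of_gt (c := c x); have := hbb'.ge_of_gt (c := c y)
  have := hbb'.le_of_lt (c := c x); have := hbb'.le_of_lt (c := c y)
  simp only [mem_range, not_exists] at hmiss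
  simp only [comp, Equiv.swap_apply_def]
  rcases hmiss with h | h <;> have := h x <;> have := h y <;> split_ifs <;> grind

theorem mem_range_swap_comp {α β : Type*} [DecidableEq β] {c : α → β} {b b' x : β} :
    x ∈ range (Equiv.swap b b' ∘ c) ↔ Equiv.swap b b' x ∈ range c := by
  simp only [mem_range, comp, Equiv.swap_apply_eq_iff]

variable {r l m : ℕ}

def IsTwoColumnSSYT (p : (Fin r → Fin m) × (Fin l → Fin m)) : Prop :=
  StrictMono p.1 ∧ StrictMono p.2 ∧ ∀ (i : Fin r) (j : Fin l), (i : ℕ) = (j : ℕ) → p.1 i ≤ p.2 j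

def tableauxWith (r l : ℕ) (b : Fin m) : Set ((Fin r → Fin m) × (Fin l → Fin m)) :=
  {p | IsTwoColumnSSYT p ∧ b ∈ range p.2}

def swapCol₂ (b b' : Fin m) (p : (Fin r → Fin m) × (Fin l → Fin m)) :
    (Fin r → Fin m) × (Fin l → Fin m) :=
  (p.1, Equiv.swap b b' ∘ p.2)

theorem swapCol₂_involutive (b b' : Fin m) :
    Involutive (swapCol₂ (r := r) (l := l) b b') := fun _ =>
  Prod.ext rfl (funext fun _ => Equiv.swap_apply_self _ _ _)

theorem IsTwoColumnSSYT.col₁_le {p : (Fin r → Fin m) × (Fin l → Fin m)} (hp : IsTwoColumnSSYT p)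
    {b : Fin m} (hb : l + m - r ≤ b + 1) (i : Fin r) (hi : (i : ℕ) < l) : p.1 i ≤ b := by
  have := Fin.val_add_le_of_strictMono hp.1 i
  rw [Fin.le_def]
  omega

theorem isTwoColumnSSYT_swapCol₂ {p : (Fin r → Fin m) × (Fin l → Fin m)}
    (hp : IsTwoColumnSSYT p) {b b' : Fin m} (hbb' : b ⋖ b')
    (hmiss : b ∉ range p.2 ∨ b' ∉ range p.2) (hcol₁ : ∀ i : Fin r, (i : ℕ) < l → p.1 i ≤ b) :
    IsTwoColumnSSYT (swapCol₂ b b' p) := by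
  obtain ⟨hcol₁mono, hcol₂mono, hrow⟩ := hp
  refine ⟨hcol₁mono, hcol₂mono.swap_comp hbb' hmiss, fun i j hij => ?_⟩
  simp only [swapCol₂, comp, Equiv.swap_apply_def]
  split_ifs with hb hb'
  · exact (hrow i j hij).trans (hb ▸ hbb'.le)
  · exact hcol₁ i (hij ▸ j.isLt)
  · exact hrow i j hij

theorem swapCol₂_mem_tableauxWith_diff {p : (Fin r → Fin m) × (Fin l → Fin m)} {b b' : Fin m}
    (hp : p ∈ tableauxWith r l b \ tableauxWith r l b')
    (hssyt : IsTwoColumnSSYT (swapCol₂ b b' p)) :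
    swapCol₂ b b' p ∈ tableauxWith r l b' \ tableauxWith r l b := by
  obtain ⟨⟨hpssyt, hb⟩, hb'⟩ := hp
  refine ⟨⟨hssyt, ?_⟩, fun ⟨_, hb''⟩ => hb' ⟨hpssyt, ?_⟩⟩
  · simpa only [swapCol₂, mem_range_swap_comp, Equiv.swap_apply_right] using hb
  · simpa only [swapCol₂, mem_range_swap_comp, Equiv.swap_apply_left] using hb''

theorem swapCol₂_comm (b b' : Fin m) :
    swapCol₂ (r := r) (l := l) b b' = swapCol₂ b' b := by
  unfold swapCol₂
  rw [Equiv.swap_comm]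

theorem ncard_tableauxWith_eq {b b' : Fin m} (hbb' : b ⋖ b') (hb : l + m - r ≤ b + 1) :
    (tableauxWith r l b).ncard = (tableauxWith r l b').ncard := by
  set A := tableauxWith r l b
  set B := tableauxWith r l b'
  have hAB : MapsTo (swapCol₂ b b') (A \ B) (B \ A) := fun p hp =>
    swapCol₂_mem_tableauxWith_diff hp
      (isTwoColumnSSYT_swapCol₂ hp.1.1 hbb' (Or.inr fun h => hp.2 ⟨hp.1.1, h⟩) (hp.1.1.col₁_le hb))
  have hBA : MapsTo (swapCol₂ b b') (B \ A) (A \ B) := fun p hp => by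
    rw [swapCol₂_comm]
    refine swapCol₂_mem_tableauxWith_diff hp ?_
    rw [← swapCol₂_comm]
    exact isTwoColumnSSYT_swapCol₂ hp.1.1 hbb' (Or.inl fun h => hp.2 ⟨hp.1.1, h⟩)
      (hp.1.1.col₁_le hb)
  have hinv := (swapCol₂_involutive (r := r) (l := l) b b').leftInverse
  have hbij : BijOn (swapCol₂ b b') (A \ B) (B \ A) :=
    InvOn.bijOn ⟨hinv.leftInvOn _, hinv.leftInvOn _⟩ hAB hBA
  rw [← ncard_inter_add_ncard_sdiff_eq_ncard A B, ← ncard_inter_add_ncard_sdiff_eq_ncard B A,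
    inter_comm, hbij.ncard_eq]

theorem Ycard_val_add_one (b : Fin m) : Ycard r l m (b + 1) = (tableauxWith r l b).ncard := by
  rw [Ycard, ← Nat.card_coe_set_eq]
  congr! 3 with p
  simp [tableauxWith, IsTwoColumnSSYT, Fin.val_inj]

theorem Ycard_eq_zero_of_add_le (h : l + m ≤ r) (β : ℕ) : Ycard r l m β = 0 := by
  rw [Ycard, Nat.card_eq_zero]
  refine Or.inl ⟨?_⟩
  rintro ⟨p, ⟨hcol₁, -, -⟩, j, -⟩
  have := Fintype.card_le_of_injective _ hcol₁.injective
  simp only [Fintype.card_fin] at this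
  have := j.isLt
  omega

theorem Ycard_eq_Ycard_add_one {γ : ℕ} (hγ : l + m - r ≤ γ) (hγm : γ + 1 ≤ m) :
    Ycard r l m γ = Ycard r l m (γ + 1) := by
  cases γ with
  | zero => rw [Ycard_eq_zero_of_add_le (by omega), Ycard_eq_zero_of_add_le (by omega)]
  | succ k =>
    let b : Fin m := ⟨k, by omega⟩
    let b' : Fin m := ⟨k + 1, hγm⟩
    calc Ycard r l m (k + 1) = (tableauxWith r l b).ncard := Ycard_val_add_one b
      _ = (tableauxWith r l b').ncard :=
        ncard_tableauxWith_eq (Fin.covBy_iff.2 (Nat.covBy_iff_add_one_eq.2 rfl)) hγ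
      _ = Ycard r l m (k + 1 + 1) := (Ycard_val_add_one b').symm

theorem Ycard_const_general (r l m β β' : ℕ)
    (hβ1 : l + m - r ≤ β) (hβ2 : β ≤ m) (hβ'1 : l + m - r ≤ β') (hβ'2 : β' ≤ m) :
    Ycard r l m β = Ycard r l m β' := by
  have hstep (γ : ℕ) (hγ : γ ∈ Icc (l + m - r) m) (hγ' : Order.succ γ ∈ Icc (l + m - r) m) :
      Ycard r l m γ = Ycard r l m (Order.succ γ) :=
    Ycard_eq_Ycard_add_one hγ.1 hγ'.2
  have hmono : MonotoneOn (Ycard r l m) (Icc (l + m - r) m) :=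
    monotoneOn_of_le_succ ordConnected_Icc fun γ _ hγ hγ' => (hstep γ hγ hγ').le
  have hanti : AntitoneOn (Ycard r l m) (Icc (l + m - r) m) :=
    antitoneOn_of_succ_le ordConnected_Icc fun γ _ hγ hγ' => (hstep γ hγ hγ').ge
  have hβ : β ∈ Icc (l + m - r) m := ⟨hβ1, hβ2⟩
  have hβ' : β' ∈ Icc (l + m - r) m := ⟨hβ'1, hβ'2⟩
  rcases le_total β β' with h | h
  · exact le_antisymm (hmono hβ hβ' h) (hanti hβ hβ' h)
  · exact le_antisymm (hanti hβ' hβ h) (hmono hβ' hβ h)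

/-- For `l ≤ r` and `l + m − r ≤ β, β' ≤ m`, the count `Y_{r,l}^β(m)` is independent
of `β`. -/
theorem Ycard_const (r l m β β' : ℕ) (hlr : l ≤ r) (hrm : r ≤ m)
    (hβ1 : l + m - r ≤ β) (hβ2 : β ≤ m) (hβ'1 : l + m - r ≤ β') (hβ'2 : β' ≤ m) :
    Ycard r l m β = Ycard r l m β' :=
  Ycard_const_general r l m β β' hβ1 hβ2 hβ'1 hβ'2
end

section
/- For integers n ≥ 2, 1 ≤ s, 1 ≤ t with s + t < n: (t/(n−s−1))·C(n−2, n−s−2)·C(n−1, n−s−t−1) = C(n, s)·C(n, s+t)·(t(n−s)(n−s−t))/(n²(n−1)). -/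
/-! Cancelling `n - s` and `n - s - t` against the binomials on the right, via
`C(n, k) (n - k) = n C(n - 1, k)`, turns `C(n, s)` into `n (n - 1) C(n - 2, s) / (n - s - 1)` and
`C(n, s + t)` into `n C(n - 1, s + t)`; the two sides then agree up to the symmetry
`C(m, k) = C(m, m - k)`. -/

theorem Nat.cast_choose_mul_sub {R : Type*} [CommRing R] {n k : ℕ} (hk : k ≤ n) :
    (n.choose k : R) * ((n : R) - k) = n * ((n - 1).choose k : R) := by
  obtain _ | m := n
  · simp [Nat.le_zero.mp hk]
  · have := congrArg (Nat.cast : ℕ → R) (Nat.choose_mul_succ_eq m k)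
    push_cast [Nat.cast_sub hk] at this
    push_cast
    linear_combination -this

theorem Nat.cast_choose_mul_sub_mul_sub_one {R : Type*} [CommRing R] {n k : ℕ} (hk : k + 1 ≤ n) :
    (n.choose k : R) * ((n : R) - k) * ((n : R) - k - 1) = n * (n - 1) * ((n - 2).choose k : R) := by
  have h₁ : ((n - 1).choose k : R) * ((n : R) - 1 - k) = (n - 1) * ((n - 2).choose k : R) := by
    have := Nat.cast_choose_mul_sub (R := R) (n := n - 1) (k := k) (by omega)
    rwa [Nat.cast_pred (by omega), Nat.sub_sub] at this
  rw [Nat.cast_choose_mul_sub (by omega)]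
  linear_combination (n : R) * h₁

theorem ssyt_count_eq_correlation_general (n s t : ℕ) (ht : 1 ≤ t)
    (h : s + t < n) :
    (t : ℚ) / ((n : ℚ) - s - 1) *
        ((n - 2).choose (n - s - 2) : ℚ) * ((n - 1).choose (n - s - t - 1) : ℚ) =
      (n.choose s : ℚ) * (n.choose (s + t) : ℚ) *
        ((t : ℚ) * ((n : ℚ) - s) * ((n : ℚ) - s - t)) / ((n : ℚ) ^ 2 * ((n : ℚ) - 1)) := by
  have hn : (n : ℚ) ≠ 0 := Nat.cast_ne_zero.mpr (by omega)
  have hn₁ : (n : ℚ) - 1 ≠ 0 := by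
    rw [sub_ne_zero]; exact_mod_cast (by omega : n ≠ 1)
  have hns : (n : ℚ) - s - 1 ≠ 0 := by
    rw [sub_sub, sub_ne_zero]; exact_mod_cast (by omega : n ≠ s + 1)
  have hchoose_s := Nat.cast_choose_mul_sub_mul_sub_one (R := ℚ) (n := n) (k := s) (by omega)
  have hchoose_st := Nat.cast_choose_mul_sub (R := ℚ) (n := n) (k := s + t) h.le
  rw [Nat.choose_symm_of_eq_add (by omega : n - 2 = n - s - 2 + s),
    Nat.choose_symm_of_eq_add (by omega : n - 1 = n - s - t - 1 + (s + t))]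
  push_cast at hchoose_st
  field_simp
  linear_combination -((n.choose (s + t) : ℚ) * (n - s - t)) * hchoose_s -
    n * (n - 1) * ((n - 2).choose s : ℚ) * hchoose_st

/-- For `n ≥ 2`, `s, t ≥ 1` with `s + t < n`:
`(t/(n−s−1))·C(n−2,n−s−2)·C(n−1,n−s−t−1) = C(n,s)·C(n,s+t)·t(n−s)(n−s−t)/(n²(n−1))`. -/
theorem ssyt_count_eq_correlation (n s t : ℕ) (hn : 2 ≤ n) (hs : 1 ≤ s) (ht : 1 ≤ t)
    (h : s + t < n) :
    (t : ℚ) / ((n : ℚ) - s - 1) *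
        ((n - 2).choose (n - s - 2) : ℚ) * ((n - 1).choose (n - s - t - 1) : ℚ) =
      (n.choose s : ℚ) * (n.choose (s + t) : ℚ) *
        ((t : ℚ) * ((n : ℚ) - s) * ((n : ℚ) - s - t)) / ((n : ℚ) ^ 2 * ((n : ℚ) - 1)) :=
  ssyt_count_eq_correlation_general n s t ht h
end

section
/- For integers n, i, j, a with 1 ≤ i < n, j = n, and 2 ≤ a ≤ n, the difference (C(n−1, n−i) − C(n−a, n−i))/(n·C(n, i−1)) − (C(n−1, n−i−1) − C(n−a, n−i−1))/(n·C(n, i)) equals 1/n² + ((n−i)·C(i−1, a−2) − C(i−1, a−1))/(a·n·C(n, a)). -/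
/-!
With `k = i - 1` or `k = i`, every quotient on the left is a rational function of `n`, `k` and
one binomial coefficient. The absorption identity `n C(n-1, k) = (n - k) C(n, k)` turns the
`C(n-1, ·)` terms into `(n - i + 1)/n²` and `(n - i)/n²`, whose difference is `1/n²`.
Counting chains `a-set ⊆ (k+1)-set ⊆ [n]` in two ways turns the `C(n-a, ·)` terms into
multiples of `C(i-1, a-1)` and `C(i, a-1)` over `a n C(n, a)`, and Pascal's rule for
`C(i, a-1)` produces the second summand.
-/

namespace Nat

theorem mul_pred_choose_sub_succ {n k : ℕ} (hk : k < n) :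
    n * (n - 1).choose (n - (k + 1)) = (n - k) * n.choose k := by
  obtain ⟨m, rfl⟩ : ∃ m, n = m + 1 := ⟨n - 1, by omega⟩
  have h := add_one_mul_choose_eq m (m - k)
  rw [show m - k + 1 = m + 1 - k by omega, choose_symm (n := m + 1) (by omega)] at h
  rw [show m + 1 - 1 = m by omega, show m + 1 - (k + 1) = m - k by omega, h, mul_comm]

theorem succ_mul_choose_mul_choose_sub {n k : ℕ} (a : ℕ) (hk : k < n) :
    (a + 1) * n.choose (a + 1) * (n - (a + 1)).choose (n - (k + 1)) =
      (n - k) * k.choose a * n.choose k := by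
  rcases le_or_gt a k with hak | hka
  · rw [show n - (k + 1) = n - (a + 1) - (k - a) by omega, choose_symm (by omega)]
    calc (a + 1) * n.choose (a + 1) * (n - (a + 1)).choose (k - a)
        = n.choose (k + 1) * ((k + 1).choose (a + 1) * (a + 1)) := by
          have h := choose_mul (n := n) (k := k + 1) (s := a + 1) (by omega)
          rw [Nat.add_sub_add_right] at h
          rw [mul_assoc, ← h]
          ring
      _ = n.choose (k + 1) * (k + 1) * k.choose a := by
          rw [← add_one_mul_choose_eq]; ring
      _ = (n - k) * k.choose a * n.choose k := by
          rw [choose_succ_right_eq]; ring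
  · rcases le_or_gt (a + 1) n with han | hna
    · rw [choose_eq_zero_of_lt (by omega : n - (a + 1) < n - (k + 1)), choose_eq_zero_of_lt hka]
      simp
    · rw [choose_eq_zero_of_lt hna, choose_eq_zero_of_lt hka]
      simp

section

variable {K : Type*} [Field K] [CharZero K]

theorem cast_choose_pred_div {n k : ℕ} (hk : k < n) :
    ((n - 1).choose (n - (k + 1)) : K) / (n * n.choose k) = (n - k) / n ^ 2 := by
  have h := congrArg (Nat.cast : ℕ → K) (Nat.mul_pred_choose_sub_succ hk)
  push_cast [Nat.cast_sub hk.le] at h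
  have : (n.choose k : K) ≠ 0 := Nat.cast_ne_zero.mpr (Nat.choose_pos hk.le).ne'
  have : (n : K) ≠ 0 := Nat.cast_ne_zero.mpr (by omega)
  rw [div_eq_div_iff (by positivity) (by positivity)]
  linear_combination n * h

theorem cast_choose_sub_div {n k : ℕ} (a : ℕ) (hk : k < n) (ha : a < n) :
    ((n - (a + 1)).choose (n - (k + 1)) : K) / (n * n.choose k) =
      (n - k) * k.choose a / ((a + 1) * n * n.choose (a + 1)) := by
  have h := congrArg (Nat.cast : ℕ → K) (Nat.succ_mul_choose_mul_choose_sub a hk)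
  push_cast [Nat.cast_sub hk.le] at h
  have : (n.choose k : K) ≠ 0 := Nat.cast_ne_zero.mpr (Nat.choose_pos hk.le).ne'
  have : (n.choose (a + 1) : K) ≠ 0 := Nat.cast_ne_zero.mpr (Nat.choose_pos ha).ne'
  have : (a + 1 : K) ≠ 0 := Nat.cast_add_one_ne_zero a
  have : (n : K) ≠ 0 := Nat.cast_ne_zero.mpr (by omega)
  rw [div_eq_div_iff (by positivity) (by positivity)]
  linear_combination n * h

end

end Nat

/-- For `1 ≤ i < n` and `2 ≤ a ≤ n`, the two-point TASEP correlation `E_{n,i}(1,a)`: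
`(C(n−1,n−i) − C(n−a,n−i))/(n·C(n,i−1)) − (C(n−1,n−i−1) − C(n−a,n−i−1))/(n·C(n,i))`
equals `1/n² + ((n−i)·C(i−1,a−2) − C(i−1,a−1))/(a·n·C(n,a))`. -/
theorem correlation_En_i (n i a : ℕ) (hi : 1 ≤ i) (hin : i < n) (ha : 2 ≤ a) (han : a ≤ n) :
    (((n - 1).choose (n - i) : ℚ) - ((n - a).choose (n - i) : ℚ)) /
        ((n : ℚ) * (n.choose (i - 1) : ℚ)) -
      (((n - 1).choose (n - i - 1) : ℚ) - ((n - a).choose (n - i - 1) : ℚ)) /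
        ((n : ℚ) * (n.choose i : ℚ)) =
      1 / (n : ℚ) ^ 2 +
        (((n : ℚ) - i) * ((i - 1).choose (a - 2) : ℚ) - ((i - 1).choose (a - 1) : ℚ)) /
          ((a : ℚ) * (n : ℚ) * (n.choose a : ℚ)) := by
  obtain ⟨j, rfl⟩ : ∃ j, i = j + 1 := ⟨i - 1, by omega⟩
  obtain ⟨b, rfl⟩ : ∃ b, a = b + 2 := ⟨a - 2, by omega⟩
  have e1 := Nat.cast_choose_pred_div (K := ℚ) (show j < n by omega)
  have e2 := Nat.cast_choose_pred_div (K := ℚ) hin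
  have e3 := Nat.cast_choose_sub_div (K := ℚ) (b + 1) (show j < n by omega) (by omega)
  have e4 := Nat.cast_choose_sub_div (K := ℚ) (b + 1) hin (by omega)
  simp only [Nat.add_sub_cancel, Nat.sub_sub, Nat.add_assoc, Nat.reduceAdd, Nat.add_succ_sub_one,
    Nat.cast_add, Nat.cast_one] at e1 e2 e3 e4 ⊢
  rw [sub_div, sub_div, e1, e2, e3, e4, Nat.choose_succ_succ', Nat.cast_add]
  have : (n : ℚ) ≠ 0 := Nat.cast_ne_zero.mpr (by omega)
  have : (n.choose (b + 2) : ℚ) ≠ 0 := Nat.cast_ne_zero.mpr (Nat.choose_pos han).ne'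
  field_simp
  ring
end

section
/- For integers n ≥ 3 and r, s, t ≥ 1 with r + s + t < n: Σ_{k=r+s+t+1}^{n} Σ_{j=r+s+1}^{r+s+t} Σ_{i=r+1}^{r+s} 6(j−i)(k−i)(k−j) = s·t·(s+t)·(n−r)·(n−r−s)·(n−r−s−t). -/
/-!
With `a = r`, `b = r + s`, `c = r + s + t`, `d = n`, the right-hand side is the product
`V a b c d` of the six pairwise differences of the four endpoints, and the summand
`6 (j - i) (k - i) (k - j)` is the mixed third backward difference of `V a i j k` in `i`, `j`
and `k`. Since `V` vanishes whenever two of its arguments coincide, the sum over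
`i ∈ (a, b]`, `j ∈ (b, c]`, `k ∈ (c, d]` telescopes three times down to `V a b c d`.
-/

open Finset

lemma sum_Ioc_eq_sub_of_eq_sub_pred {G : Type*} [AddCommGroup G] {f : ℕ → G} (g : ℤ → G)
    (hfg : ∀ i : ℕ, f i = g i - g (i - 1)) {a b : ℕ} (hab : a ≤ b) :
    ∑ i ∈ Ioc a b, f i = g b - g a := by
  induction b, hab using Nat.le_induction with
  | base => simp
  | succ b hab ih =>
    rw [sum_Ioc_succ_top hab, ih, hfg]
    push_cast
    rw [add_sub_cancel_right]
    abel

def pairwiseDiffProd (a b c d : ℤ) : ℤ :=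
  (b - a) * (c - a) * (d - a) * (c - b) * (d - b) * (d - c)

lemma sum_Ioc_Ioc_Ioc_eq_pairwiseDiffProd {a b c d : ℕ} (hab : a ≤ b) (hbc : b ≤ c)
    (hcd : c ≤ d) :
    ∑ k ∈ Ioc c d, ∑ j ∈ Ioc b c, ∑ i ∈ Ioc a b,
        6 * ((j : ℤ) - i) * ((k : ℤ) - i) * ((k : ℤ) - j) =
      pairwiseDiffProd a b c d := by
  set V := pairwiseDiffProd a with hV
  calc ∑ k ∈ Ioc c d, ∑ j ∈ Ioc b c, ∑ i ∈ Ioc a b,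
          6 * ((j : ℤ) - i) * ((k : ℤ) - i) * ((k : ℤ) - j)
      _ = ∑ k ∈ Ioc c d, ∑ j ∈ Ioc b c,
          (V b j k - V b (j - 1) k - V b j (k - 1) + V b (j - 1) (k - 1)) := by
        refine sum_congr rfl fun k _ ↦ sum_congr rfl fun j _ ↦ ?_
        rw [sum_Ioc_eq_sub_of_eq_sub_pred
          (fun x ↦ V x j k - V x (j - 1) k - V x j (k - 1) + V x (j - 1) (k - 1))
          (fun i ↦ by simp only [hV, pairwiseDiffProd]; ring) hab]
        simp only [hV, pairwiseDiffProd]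
        ring
      _ = ∑ k ∈ Ioc c d, (V b c k - V b c (k - 1)) := by
        refine sum_congr rfl fun k _ ↦ ?_
        rw [sum_Ioc_eq_sub_of_eq_sub_pred (fun y ↦ V b y k - V b y (k - 1))
          (fun j ↦ by ring) hbc]
        simp only [hV, pairwiseDiffProd]
        ring
      _ = V b c d := by
        rw [sum_Ioc_eq_sub_of_eq_sub_pred (V b c) (fun k ↦ rfl) hcd]
        simp only [hV, pairwiseDiffProd]
        ring

lemma sum_Ioc_Ioc_Ioc_tsub_eq {a b c d : ℕ} (hab : a ≤ b) (hbc : b ≤ c) (hcd : c ≤ d) :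
    ∑ k ∈ Ioc c d, ∑ j ∈ Ioc b c, ∑ i ∈ Ioc a b, 6 * (j - i) * (k - i) * (k - j) =
      (b - a) * (c - b) * (c - a) * (d - a) * (d - b) * (d - c) := by
  zify [hab, hbc, hcd, hab.trans hbc, (hab.trans hbc).trans hcd, hbc.trans hcd]
  calc _ = ∑ k ∈ Ioc c d, ∑ j ∈ Ioc b c, ∑ i ∈ Ioc a b,
          6 * ((j : ℤ) - i) * ((k : ℤ) - i) * ((k : ℤ) - j) := by
        refine sum_congr rfl fun k hk ↦ sum_congr rfl fun j hj ↦ sum_congr rfl fun i hi ↦ ?_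
        simp only [mem_Ioc] at hk hj hi
        rw [Nat.cast_sub (by omega : i ≤ j), Nat.cast_sub (by omega : i ≤ k),
          Nat.cast_sub (by omega : j ≤ k)]
    _ = pairwiseDiffProd a b c d := sum_Ioc_Ioc_Ioc_eq_pairwiseDiffProd hab hbc hcd
    _ = _ := by rw [pairwiseDiffProd]; ring

theorem triple_sum_identity_general (n r s t : ℕ) (h : r + s + t < n) :
    (∑ k ∈ Finset.Icc (r + s + t + 1) n, ∑ j ∈ Finset.Icc (r + s + 1) (r + s + t),
        ∑ i ∈ Finset.Icc (r + 1) (r + s), 6 * (j - i) * (k - i) * (k - j)) =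
      s * t * (s + t) * (n - r) * (n - r - s) * (n - r - s - t) := by
  simp only [Icc_add_one_left_eq_Ioc]
  rw [sum_Ioc_Ioc_Ioc_tsub_eq (by omega) (by omega) h.le, Nat.sub_sub, Nat.sub_sub,
    show r + s - r = s by omega, show r + s + t - (r + s) = t by omega,
    show r + s + t - r = s + t by omega]

/-- For `n ≥ 3` and `r, s, t ≥ 1` with `r + s + t < n`:
`Σ_{k=r+s+t+1}^{n} Σ_{j=r+s+1}^{r+s+t} Σ_{i=r+1}^{r+s} 6(j−i)(k−i)(k−j)
  = s·t·(s+t)·(n−r)·(n−r−s)·(n−r−s−t)`. -/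
theorem triple_sum_identity (n r s t : ℕ) (hn : 3 ≤ n) (hr : 1 ≤ r) (hs : 1 ≤ s)
    (ht : 1 ≤ t) (h : r + s + t < n) :
    (∑ k ∈ Finset.Icc (r + s + t + 1) n, ∑ j ∈ Finset.Icc (r + s + 1) (r + s + t),
        ∑ i ∈ Finset.Icc (r + 1) (r + s), 6 * (j - i) * (k - i) * (k - j)) =
      s * t * (s + t) * (n - r) * (n - r - s) * (n - r - s - t) :=
  triple_sum_identity_general n r s t h
end

section
/- For integers n ≥ 3 and r, s, t ≥ 1 with r+s+t < n: SSYT_{n−r−3, n−r−s−2, n−r−s−t−1}(n−3) / (C(n,r)·C(n,r+s)·C(n,r+s+t)) = s·t·(s+t)·(n−r)·(n−r−s)·(n−r−s−t) / (n³(n−1)²(n−2)), where SSYT_{a,b,c}(m) = ((a−b+1)(a−c+2)(b−c+1))/((a+1)(a+2)(b+1))·C(m,a)·C(m+1,b)·C(m+2,c). -/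
/-!
Since the columns have lengths `n-r-3 ≥ n-r-s-2 ≥ n-r-s-t-1` with entries at most `n-3`, taking
complements turns the three binomials of the hook-content formula into `C(n-3,r)`, `C(n-2,r+s)` and
`C(n-1,r+s+t)`, while the column differences give the factor `s·t·(s+t)`. Each `C(n-j,k)` is
`C(n,k)` times the falling-factorial ratio `∏_{i<j} (n-k-i)/(n-i)`, so dividing by
`C(n,r)·C(n,r+s)·C(n,r+s+t)` leaves a rational function of `n, r, s, t`, which cancels to the
stated one.
-/

/-- The hook-content formula
`SSYT_{a,b,c}(m) = ((a−b+1)(a−c+2)(b−c+1))/((a+1)(a+2)(b+1))·C(m,a)·C(m+1,b)·C(m+2,c)`. -/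
def ssytF3 (a b c m : ℕ) : ℚ :=
  (((a - b + 1) * (a - c + 2) * (b - c + 1) : ℕ) : ℚ) /
      (((a + 1) * (a + 2) * (b + 1) : ℕ) : ℚ) *
    (m.choose a : ℚ) * ((m + 1).choose b : ℚ) * ((m + 2).choose c : ℚ)

open Finset

theorem Nat.cast_choose_sub_eq_mul_prod {K : Type*} [Field K] [CharZero K] {N k j : ℕ}
    (h : k + j ≤ N) :
    ((N - j).choose k : K) = N.choose k * ∏ i ∈ range j, ((N : K) - k - i) / (N - i) := by
  induction j with
  | zero => simp
  | succ j ih =>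
    have step := congrArg (Nat.cast : ℕ → K) (Nat.choose_mul_succ_eq (N - (j + 1)) k)
    rw [show N - (j + 1) + 1 = N - j by omega, show N - j - k = N - k - j by omega] at step
    push_cast [Nat.cast_sub (show j ≤ N by omega), Nat.cast_sub (show k ≤ N by omega),
      Nat.cast_sub (show j ≤ N - k by omega)] at step
    have hNj : (N : K) - j ≠ 0 := by
      rw [sub_ne_zero]
      exact_mod_cast (show N ≠ j by omega)
    rw [prod_range_succ, ← mul_assoc, ← ih (by omega)]
    field_simp
    linear_combination step

theorem ssytF3_eq_mul_choose {n r s t : ℕ} (hs : 1 ≤ s) (ht : 1 ≤ t) (h : r + s + t < n) :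
    ssytF3 (n - r - 3) (n - r - s - 2) (n - r - s - t - 1) (n - 3) =
      s * t * (s + t) / (((n : ℚ) - r - 2) * (n - r - 1) * (n - r - s - 1)) *
        (n - 3).choose r * (n - 2).choose (r + s) * (n - 1).choose (r + s + t) := by
  have hC₁ : (n - 3).choose (n - r - 3) = (n - 3).choose r := Nat.choose_symm_of_eq_add (by omega)
  have hC₂ : (n - 2).choose (n - r - s - 2) = (n - 2).choose (r + s) :=
    Nat.choose_symm_of_eq_add (by omega)
  have hC₃ : (n - 1).choose (n - r - s - t - 1) = (n - 1).choose (r + s + t) :=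
    Nat.choose_symm_of_eq_add (by omega)
  rw [ssytF3, show n - 3 + 1 = n - 2 by omega, show n - 3 + 2 = n - 1 by omega, hC₁, hC₂, hC₃,
    show n - r - 3 - (n - r - s - 2) + 1 = s by omega,
    show n - r - 3 - (n - r - s - t - 1) + 2 = s + t by omega,
    show n - r - s - 2 - (n - r - s - t - 1) + 1 = t by omega]
  simp (disch := omega) only [Nat.cast_sub, Nat.cast_add, Nat.cast_mul, Nat.cast_ofNat,
    Nat.cast_one]
  ring

theorem ssyt3_correlation_general (n r s t : ℕ) (hs : 1 ≤ s)
    (ht : 1 ≤ t) (h : r + s + t < n) :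
    ssytF3 (n - r - 3) (n - r - s - 2) (n - r - s - t - 1) (n - 3) /
        ((n.choose r : ℚ) * (n.choose (r + s) : ℚ) * (n.choose (r + s + t) : ℚ)) =
      ((s * t * (s + t) * (n - r) * (n - r - s) * (n - r - s - t) : ℕ) : ℚ) /
        ((n : ℚ) ^ 3 * ((n : ℚ) - 1) ^ 2 * ((n : ℚ) - 2)) := by
  rw [ssytF3_eq_mul_choose hs ht h, Nat.cast_choose_sub_eq_mul_prod (by omega),
    Nat.cast_choose_sub_eq_mul_prod (by omega), Nat.cast_choose_sub_eq_mul_prod (by omega)]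
  simp only [prod_range_succ, prod_range_zero, Nat.cast_zero, Nat.cast_one, Nat.cast_ofNat,
    sub_zero, one_mul]
  simp (disch := omega) only [Nat.cast_sub, Nat.cast_add, Nat.cast_mul]
  have hn : (r : ℚ) + s + t + 1 ≤ n := by exact_mod_cast h
  have hs' : (1 : ℚ) ≤ s := by exact_mod_cast hs
  have ht' : (1 : ℚ) ≤ t := by exact_mod_cast ht
  have hr : (0 : ℚ) ≤ r := r.cast_nonneg
  have hC₁ : (n.choose r : ℚ) ≠ 0 := Nat.cast_ne_zero.mpr (Nat.choose_pos (by omega)).ne'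
  have hC₂ : (n.choose (r + s) : ℚ) ≠ 0 := Nat.cast_ne_zero.mpr (Nat.choose_pos (by omega)).ne'
  have hC₃ : (n.choose (r + s + t) : ℚ) ≠ 0 :=
    Nat.cast_ne_zero.mpr (Nat.choose_pos (by omega)).ne'
  have : (n : ℚ) ≠ 0 := by linarith
  have : (n : ℚ) - 1 ≠ 0 := by linarith
  have : (n : ℚ) - 2 ≠ 0 := by linarith
  have : (n : ℚ) - r - 1 ≠ 0 := by linarith
  have : (n : ℚ) - r - 2 ≠ 0 := by linarith
  have : (n : ℚ) - r - s - 1 ≠ 0 := by linarith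
  field_simp
  ring

/-- For `n ≥ 3` and `r, s, t ≥ 1` with `r+s+t < n`:
`SSYT_{n−r−3, n−r−s−2, n−r−s−t−1}(n−3) / (C(n,r)·C(n,r+s)·C(n,r+s+t))
  = s·t·(s+t)·(n−r)·(n−r−s)·(n−r−s−t) / (n³(n−1)²(n−2))`. -/
theorem ssyt3_correlation (n r s t : ℕ) (hn : 3 ≤ n) (hr : 1 ≤ r) (hs : 1 ≤ s)
    (ht : 1 ≤ t) (h : r + s + t < n) :
    ssytF3 (n - r - 3) (n - r - s - 2) (n - r - s - t - 1) (n - 3) /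
        ((n.choose r : ℚ) * (n.choose (r + s) : ℚ) * (n.choose (r + s + t) : ℚ)) =
      ((s * t * (s + t) * (n - r) * (n - r - s) * (n - r - s - t) : ℕ) : ℚ) /
        ((n : ℚ) ^ 3 * ((n : ℚ) - 1) ^ 2 * ((n : ℚ) - 2)) :=
  ssyt3_correlation_general n r s t hs ht h
end
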